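/- arXiv:1812.08905 — 3 statements merged into one kernel-verified Lean document; each statement's English description precedes it below -/
import Mathlib

section
/- Let 0 ≤ r ≤ N, let W ∈ W_r, and let j, k be integers with 0 ≤ j ≤ k and r + k ≤ N. Then A₋^{j}A₊^{k}W = (∏_{i=1}^{j} m(r, k−i))·A₊^{k−j}W. -/
open Finset

/-- Outer adjacency operator on vertex functions of the Boolean hypercube `B_N`:
`(A₊V)(S) = Σ_{s∈S} V(S∖{s})`. -/
def Aplus (N : ℕ) (V : Finset (Fin N) → ℝ) : Finset (Fin N) → ℝ :=
  fun S => ∑ s ∈ S, V (S.erase s)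

/-- Inner adjacency operator: `(A₋V)(R) = Σ_{b∉R} V(R∪{b})`. -/
def Aminus (N : ℕ) (V : Finset (Fin N) → ℝ) : Finset (Fin N) → ℝ :=
  fun R => ∑ b ∈ Rᶜ, V (insert b R)

/-- Adjacency operator `A = A₊ + A₋`. -/
def Adj (N : ℕ) (V : Finset (Fin N) → ℝ) : Finset (Fin N) → ℝ :=
  fun S => Aplus N V S + Aminus N V S

/-- Graph Laplacian `L = N·I − A`. -/
def Lap (N : ℕ) (V : Finset (Fin N) → ℝ) : Finset (Fin N) → ℝ :=
  fun S => (N : ℝ) * V S - Adj N V S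

/-- Inner product `⟨V,U⟩ = Σ_S V(S)U(S)` on vertex functions. -/
def inner' (N : ℕ) (V U : Finset (Fin N) → ℝ) : ℝ :=
  ∑ S : Finset (Fin N), V S * U S

/-- `V` is supported on the Hamming sphere `Σ_r` (vanishes off sets of cardinality `r`). -/
def suppOn (N r : ℕ) (V : Finset (Fin N) → ℝ) : Prop :=
  ∀ S : Finset (Fin N), S.card ≠ r → V S = 0

/-- Membership in `W_r`: supported on `Σ_r` and orthogonal to `A₊ℓ²(Σ_{r−1})`.
(For `r = 0` the orthogonality condition is vacuous, so `W_0 = ℓ²(Σ_0)`.) -/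
def memW (N r : ℕ) (W : Finset (Fin N) → ℝ) : Prop :=
  suppOn N r W ∧
    ∀ U : Finset (Fin N) → ℝ, suppOn N (r - 1) U → inner' N W (Aplus N U) = 0

/-- `m(r,k) = Σ_{j=0}^{k} (N − 2(r+j))`. -/
def mcoef (N r k : ℕ) : ℝ :=
  ∑ j ∈ Finset.range (k + 1), ((N : ℝ) - 2 * ((r : ℝ) + (j : ℝ)))

/-- Hadamard vector `H_S(R) = (−1)^{|R∩S|}`. -/
def Had (N : ℕ) (S R : Finset (Fin N)) : ℝ := (-1 : ℝ) ^ (R ∩ S).card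

/-- Spatial truncation `Q_K`: restriction to the Hamming ball of radius `K`. -/
def QK (N K : ℕ) (V : Finset (Fin N) → ℝ) : Finset (Fin N) → ℝ :=
  fun S => if S.card ≤ K then V S else 0

/-- Spectral projection `P_K`: orthogonal projection onto `span{H_S : |S| ≤ K}`,
given by `P_K V = Σ_{|S|≤K} (⟨V,H_S⟩/2^N)·H_S`. -/
noncomputable def PK (N K : ℕ) (V : Finset (Fin N) → ℝ) : Finset (Fin N) → ℝ :=
  fun R => ∑ S ∈ Finset.univ.filter (fun S : Finset (Fin N) => S.card ≤ K),
    (inner' N V (Had N S) / 2 ^ N) * Had N S R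

/-- Diagonal operator `(TV)(R) = √(2|R|)·V(R)`. -/
noncomputable def Tdiag (N : ℕ) (V : Finset (Fin N) → ℝ) : Finset (Fin N) → ℝ :=
  fun R => Real.sqrt (2 * (R.card : ℝ)) * V R

/-- Boolean difference operator conjugated by the Hadamard transform:
`HBDO = T(αI − L)T + βL`. -/
noncomputable def HBDO (N : ℕ) (α β : ℝ) (V : Finset (Fin N) → ℝ) : Finset (Fin N) → ℝ :=
  fun R => Tdiag N (fun S => α * Tdiag N V S - Lap N (Tdiag N V) S) R + β * Lap N V R

/-- Hadamard transform `(HV)(R) = Σ_S (−1)^{|R∩S|} V(S)`. -/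
def Hmat (N : ℕ) (V : Finset (Fin N) → ℝ) : Finset (Fin N) → ℝ :=
  fun R => ∑ S : Finset (Fin N), Had N S R * V S

/-- Commutator `C = A₋A₊ − A₊A₋`. -/
def Cop (N : ℕ) (V : Finset (Fin N) → ℝ) : Finset (Fin N) → ℝ :=
  fun S => Aminus N (Aplus N V) S - Aplus N (Aminus N V) S

section Aux
variable (N : ℕ)

lemma adj_inner (V U : Finset (Fin N) → ℝ) :
    inner' N V (Aplus N U) = inner' N (Aminus N V) U := by
  unfold inner' Aplus Aminus
  simp_rw [Finset.mul_sum, Finset.sum_mul]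
  rw [Finset.sum_sigma', Finset.sum_sigma']
  refine Finset.sum_nbij' (fun p => ⟨p.1.erase p.2, p.2⟩)
    (fun p => ⟨insert p.2 p.1, p.2⟩) ?_ ?_ ?_ ?_ ?_
  · rintro ⟨S, s⟩ hs
    simp only [Finset.mem_sigma, Finset.mem_univ, true_and] at hs ⊢
    simp [Finset.mem_compl]
  · rintro ⟨T, b⟩ hb
    simp only [Finset.mem_sigma, Finset.mem_univ, true_and, Finset.mem_compl] at hb ⊢
    simp
  · rintro ⟨S, s⟩ hs
    simp only [Finset.mem_sigma, Finset.mem_univ, true_and] at hs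
    simp [Finset.insert_erase hs]
  · rintro ⟨T, b⟩ hb
    simp only [Finset.mem_sigma, Finset.mem_univ, true_and, Finset.mem_compl] at hb
    simp [Finset.erase_insert hb]
  · rintro ⟨S, s⟩ hs
    simp only [Finset.mem_sigma, Finset.mem_univ, true_and] at hs
    simp [Finset.insert_erase hs]

lemma aminus_memW_eq_zero (r : ℕ) (W : Finset (Fin N) → ℝ) (hW : memW N r W) :
    Aminus N W = fun _ => 0 := by
  have hsupp : suppOn N (r - 1) (Aminus N W) := by
    intro R hR
    apply Finset.sum_eq_zero
    intro b hb
    apply hW.1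
    rw [Finset.card_insert_of_notMem (Finset.mem_compl.mp hb)]
    omega
  have h0 : inner' N (Aminus N W) (Aminus N W) = 0 := by
    rw [← adj_inner]; exact hW.2 _ hsupp
  unfold inner' at h0
  funext R
  have := (Finset.sum_eq_zero_iff_of_nonneg
    (fun S _ => mul_self_nonneg (Aminus N W S))).mp h0 R (Finset.mem_univ R)
  exact mul_self_eq_zero.mp this

lemma comm_apply (V : Finset (Fin N) → ℝ) (S : Finset (Fin N)) :
    Aminus N (Aplus N V) S = Aplus N (Aminus N V) S + ((N : ℝ) - 2 * S.card) * V S := by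
  unfold Aplus Aminus
  have h1 : ∀ b ∈ Sᶜ, ∑ s ∈ insert b S, V ((insert b S).erase s)
      = V S + ∑ s ∈ S, V (insert b (S.erase s)) := by
    intro b hb
    rw [Finset.sum_insert (Finset.mem_compl.mp hb), Finset.erase_insert (Finset.mem_compl.mp hb)]
    congr 1
    refine Finset.sum_congr rfl fun s hs => ?_
    congr 1
    exact Finset.erase_insert_of_ne (fun h => (Finset.mem_compl.mp hb) (h ▸ hs))
  have h2 : ∀ s ∈ S, ∑ b ∈ (S.erase s)ᶜ, V (insert b (S.erase s))
      = V S + ∑ b ∈ Sᶜ, V (insert b (S.erase s)) := by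
    intro s hs
    rw [Finset.compl_erase, Finset.sum_insert (by simp [hs]), Finset.insert_erase hs]
  rw [Finset.sum_congr rfl h1, Finset.sum_congr rfl h2, Finset.sum_add_distrib,
    Finset.sum_add_distrib, Finset.sum_const, Finset.sum_const, Finset.sum_comm]
  have hle : S.card ≤ N := by simpa using Finset.card_le_univ S
  have hcard : Sᶜ.card = N - S.card := by simp [Finset.card_compl]
  rw [hcard]
  simp only [nsmul_eq_mul, Nat.cast_sub hle]
  ring

lemma suppOn_aplus (s : ℕ) (V : Finset (Fin N) → ℝ) (h : suppOn N s V) :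
    suppOn N (s + 1) (Aplus N V) := by
  intro S hS
  apply Finset.sum_eq_zero
  intro x hx
  apply h
  have hpos : 1 ≤ S.card := Finset.card_pos.mpr ⟨x, hx⟩
  rw [Finset.card_erase_of_mem hx]
  omega

lemma suppOn_iter (r : ℕ) (W : Finset (Fin N) → ℝ) (h : suppOn N r W) (k : ℕ) :
    suppOn N (r + k) ((Aplus N)^[k] W) := by
  induction k with
  | zero => simpa using h
  | succ k ih =>
    rw [Function.iterate_succ_apply', ← Nat.add_assoc]
    exact suppOn_aplus N _ _ ih

lemma aplus_smul (c : ℝ) (V : Finset (Fin N) → ℝ) :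
    Aplus N (c • V) = c • Aplus N V := by
  funext S
  simp [Aplus, Finset.mul_sum]

lemma aminus_smul (c : ℝ) (V : Finset (Fin N) → ℝ) :
    Aminus N (c • V) = c • Aminus N V := by
  funext S
  simp [Aminus, Finset.mul_sum]

lemma aminus_iter_smul (j : ℕ) (c : ℝ) (V : Finset (Fin N) → ℝ) :
    (Aminus N)^[j] (c • V) = c • (Aminus N)^[j] V := by
  induction j generalizing V with
  | zero => rfl
  | succ j ih =>
    rw [Function.iterate_succ_apply, aminus_smul, ih, ← Function.iterate_succ_apply]

lemma step (r : ℕ) (W : Finset (Fin N) → ℝ) (hW : memW N r W) (k : ℕ) :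
    Aminus N ((Aplus N)^[k + 1] W) = mcoef N r k • (Aplus N)^[k] W := by
  induction k with
  | zero =>
    funext S
    simp only [zero_add, Function.iterate_one, Function.iterate_zero, id_eq, Pi.smul_apply, smul_eq_mul]
    rw [comm_apply, aminus_memW_eq_zero N r W hW]
    simp only [Aplus, Finset.sum_const_zero, zero_add]
    by_cases h : S.card = r
    · rw [h]; simp [mcoef]
    · rw [hW.1 S h]; ring
  | succ k ih =>
    funext S
    rw [Function.iterate_succ_apply' (Aplus N) (k + 1) W, comm_apply, ih, aplus_smul]
    have hsupp := suppOn_iter N r W hW.1 (k + 1)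
    simp only [Pi.smul_apply, smul_eq_mul, ← Function.iterate_succ_apply' (Aplus N) k W]
    by_cases h : S.card = r + (k + 1)
    · rw [h]
      have : mcoef N r (k + 1) = mcoef N r k + ((N : ℝ) - 2 * ((r : ℝ) + (k + 1 : ℕ))) := by
        simp only [mcoef, Finset.sum_range_succ]
        try push_cast
        try ring
      rw [this]
      push_cast
      ring
    · rw [hsupp S h]; ring
end Aux

/-- for `W ∈ W_r`, `0 ≤ j ≤ k`, `r + k ≤ N`:
`A₋^{j}A₊^{k}W = (∏_{i=1}^{j} m(r, k−i))·A₊^{k−j}W`. -/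
theorem aminus_pow_aplus_pow (N r : ℕ) (hN : 1 ≤ N) (hr : r ≤ N)
    (W : Finset (Fin N) → ℝ) (hW : memW N r W)
    (j k : ℕ) (hjk : j ≤ k) (hk : r + k ≤ N) :
    (Aminus N)^[j] ((Aplus N)^[k] W)
      = (∏ i ∈ Finset.Icc 1 j, mcoef N r (k - i)) • (Aplus N)^[k - j] W := by
  induction j generalizing k with
  | zero => simp
  | succ j ih =>
    obtain ⟨k', rfl⟩ : ∃ k', k = k' + 1 := ⟨k - 1, by omega⟩
    rw [Function.iterate_succ_apply, step N r W hW k', aminus_iter_smul,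
      ih k' (by omega) (by omega), smul_smul]
    have hidx : k' + 1 - (j + 1) = k' - j := by omega
    rw [hidx]
    congr 1
    rw [← Finset.Ico_add_one_right_eq_Icc, ← Finset.Ico_add_one_right_eq_Icc, Finset.prod_Ico_eq_prod_range,
      Finset.prod_Ico_eq_prod_range]
    have e1 : j + 1 + 1 - 1 = j + 1 := by omega
    have e2 : j + 1 - 1 = j := by omega
    rw [e1, e2, Finset.prod_range_succ', mul_comm]
    refine congrArg₂ (· * ·)
      (Finset.prod_congr rfl fun i _ => by congr 1; omega) (by congr 1 <;> omega)
end

section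
/- Let 0 ≤ r ≤ N and suppose a vertex function V supported on Σ_r is written as V = Σ_{k=0}^{r} A₊^{r−k}W_k with W_k ∈ W_k for each k. Then A₋^{r}V = (∏_{j=0}^{r−1} m(0,j))·W_0; equivalently, W_0 = A₋^{r}V / (m(0,r−1)·m(0,r−2)⋯m(0,0)). -/
open Finset

section Aux

variable {N : ℕ}

lemma Aminus_zero (N : ℕ) : Aminus N 0 = 0 := by
  funext R; simp [Aminus]

lemma Aminus_smul (N : ℕ) (c : ℝ) (V : Finset (Fin N) → ℝ) :
    Aminus N (c • V) = c • Aminus N V := by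
  funext R; simp [Aminus, Finset.mul_sum]

lemma Aplus_smul (N : ℕ) (c : ℝ) (V : Finset (Fin N) → ℝ) :
    Aplus N (c • V) = c • Aplus N V := by
  funext S; simp [Aplus, Finset.mul_sum]

lemma Aminus_add (N : ℕ) (V U : Finset (Fin N) → ℝ) :
    Aminus N (V + U) = Aminus N V + Aminus N U := by
  funext R; simp [Aminus, Finset.sum_add_distrib]

lemma Aminus_iter_zero (N m : ℕ) : (Aminus N)^[m] 0 = 0 := by
  induction m with
  | zero => rfl
  | succ m ih => rw [Function.iterate_succ_apply, Aminus_zero, ih]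

lemma Aminus_iter_smul (N m : ℕ) (c : ℝ) (V : Finset (Fin N) → ℝ) :
    (Aminus N)^[m] (c • V) = c • (Aminus N)^[m] V := by
  induction m generalizing V with
  | zero => rfl
  | succ m ih => rw [Function.iterate_succ_apply, Aminus_smul, ih,
      Function.iterate_succ_apply]

lemma Aminus_iter_add (N m : ℕ) (V U : Finset (Fin N) → ℝ) :
    (Aminus N)^[m] (V + U) = (Aminus N)^[m] V + (Aminus N)^[m] U := by
  induction m generalizing V U with
  | zero => rfl
  | succ m ih => rw [Function.iterate_succ_apply, Aminus_add, ih,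
      Function.iterate_succ_apply, Function.iterate_succ_apply]

lemma Aminus_iter_sum (N m : ℕ) {ι : Type*} (s : Finset ι) (f : ι → Finset (Fin N) → ℝ) :
    (Aminus N)^[m] (∑ i ∈ s, f i) = ∑ i ∈ s, (Aminus N)^[m] (f i) := by
  induction s using Finset.cons_induction with
  | empty => simp [Aminus_iter_zero]
  | cons a s ha ih => rw [Finset.sum_cons, Finset.sum_cons, Aminus_iter_add, ih]

lemma Aplus_suppOn {k : ℕ} {V : Finset (Fin N) → ℝ} (h : suppOn N k V) :
    suppOn N (k + 1) (Aplus N V) := by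
  intro S hS
  apply Finset.sum_eq_zero
  intro s hs
  apply h
  have h1 : 1 ≤ S.card := Finset.card_pos.2 ⟨s, hs⟩
  rw [Finset.card_erase_of_mem hs]
  omega

lemma Aplus_iter_suppOn {k : ℕ} {V : Finset (Fin N) → ℝ} (h : suppOn N k V) (m : ℕ) :
    suppOn N (k + m) ((Aplus N)^[m] V) := by
  induction m with
  | zero => exact h
  | succ m ih =>
      rw [Function.iterate_succ_apply']
      exact Nat.add_succ k m ▸ Aplus_suppOn ih

lemma Aminus_suppOn {k : ℕ} {V : Finset (Fin N) → ℝ} (h : suppOn N (k + 1) V) :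
    suppOn N k (Aminus N V) := by
  intro R hR
  apply Finset.sum_eq_zero
  intro b hb
  apply h
  rw [Finset.card_insert_of_notMem (by simpa using hb)]
  omega

/-- Adjointness: `⟨W, A₊U⟩ = ⟨A₋W, U⟩`. -/
lemma adjoint (N : ℕ) (W U : Finset (Fin N) → ℝ) :
    inner' N W (Aplus N U) = inner' N (Aminus N W) U := by
  unfold inner' Aplus Aminus
  simp only [Finset.mul_sum, Finset.sum_mul]
  rw [Finset.sum_sigma', Finset.sum_sigma']
  refine Finset.sum_nbij' (fun x => ⟨x.1.erase x.2, x.2⟩) (fun x => ⟨insert x.2 x.1, x.2⟩)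
    ?_ ?_ ?_ ?_ ?_
  · rintro ⟨S, s⟩ hx
    simp only [Finset.mem_sigma, Finset.mem_univ, true_and] at hx ⊢
    simp [hx]
  · rintro ⟨R, b⟩ hx
    simp only [Finset.mem_sigma, Finset.mem_univ, true_and] at hx ⊢
    simp
  · rintro ⟨S, s⟩ hx
    simp only [Finset.mem_sigma, Finset.mem_univ, true_and] at hx
    simp [Finset.insert_erase hx]
  · rintro ⟨R, b⟩ hx
    simp only [Finset.mem_sigma, Finset.mem_univ, true_and, Finset.mem_compl] at hx
    simp [Finset.erase_insert hx]
  · rintro ⟨S, s⟩ hx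
    simp only [Finset.mem_sigma, Finset.mem_univ, true_and] at hx
    simp [Finset.insert_erase hx]

/-- For `W ∈ W_k`, `A₋W = 0`. -/
lemma Aminus_eq_zero_of_memW {k : ℕ} {W : Finset (Fin N) → ℝ} (hW : memW N k W) :
    Aminus N W = 0 := by
  rcases k with _ | k
  · funext R
    apply Finset.sum_eq_zero
    intro b hb
    apply hW.1
    simp [Finset.card_insert_of_notMem (by simpa using hb)]
  · have hsupp : suppOn N k (Aminus N W) := Aminus_suppOn hW.1
    have horth := hW.2 (Aminus N W) (by simpa using hsupp)
    rw [adjoint] at horth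
    funext R
    by_cases hR : R ∈ (Finset.univ : Finset (Finset (Fin N)))
    · have := (Finset.sum_eq_zero_iff_of_nonneg
        (fun S _ => mul_self_nonneg (Aminus N W S))).1 horth R hR
      have h2 : Aminus N W R * Aminus N W R = 0 := this
      simpa using mul_self_eq_zero.1 h2
    · simp at hR

/-- Commutator formula: `A₋A₊V − A₊A₋V = (N − 2|S|)·V(S)` pointwise. -/
lemma cop_formula (N : ℕ) (V : Finset (Fin N) → ℝ) (S : Finset (Fin N)) :
    Aminus N (Aplus N V) S = Aplus N (Aminus N V) S + ((N : ℝ) - 2 * S.card) * V S := by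
  have hL : Aminus N (Aplus N V) S
      = ∑ b ∈ Sᶜ, (V S + ∑ s ∈ S, V (insert b (S.erase s))) := by
    unfold Aminus Aplus
    refine Finset.sum_congr rfl fun b hb => ?_
    have hbS : b ∉ S := by simpa using hb
    rw [Finset.sum_insert hbS, Finset.erase_insert hbS]
    congr 1
    refine Finset.sum_congr rfl fun s hs => ?_
    have hne : s ≠ b := fun h => hbS (h ▸ hs)
    rw [Finset.erase_insert_of_ne hne.symm]
  have hR : Aplus N (Aminus N V) S
      = ∑ s ∈ S, (V S + ∑ b ∈ Sᶜ, V (insert b (S.erase s))) := by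
    unfold Aminus Aplus
    refine Finset.sum_congr rfl fun s hs => ?_
    show ∑ b ∈ (S.erase s)ᶜ, V (insert b (S.erase s)) = _
    rw [Finset.compl_erase, Finset.sum_insert (by simp [hs])]
    rw [Finset.insert_erase hs]
  rw [hL, hR]
  simp only [Finset.sum_add_distrib, Finset.sum_const, nsmul_eq_mul]
  rw [Finset.sum_comm]
  have hcard : (Sᶜ.card : ℝ) = (N : ℝ) - S.card := by
    have h1 : Sᶜ.card = N - S.card := by
      simp [Finset.card_compl]
    rw [h1, Nat.cast_sub (by simpa using Finset.card_le_univ S)]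
  rw [hcard]
  ring

lemma comm_on_supp {k : ℕ} {X : Finset (Fin N) → ℝ} (h : suppOn N k X) :
    Aminus N (Aplus N X) = Aplus N (Aminus N X) + ((N : ℝ) - 2 * k) • X := by
  funext S
  rw [cop_formula]
  simp only [Pi.add_apply, Pi.smul_apply, smul_eq_mul]
  by_cases hS : S.card = k
  · rw [hS]
  · rw [h S hS]; ring

lemma mcoef_succ (N k m : ℕ) :
    mcoef N k (m + 1) = mcoef N k m + ((N : ℝ) - 2 * ((k : ℝ) + (m + 1 : ℕ))) := by
  unfold mcoef
  rw [Finset.sum_range_succ]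

/-- Key step: `A₋ A₊^{m+1} W = m(k,m) • A₊^m W` for `W ∈ W_k`. -/
lemma step_lemma {k : ℕ} {W : Finset (Fin N) → ℝ} (hs : suppOn N k W)
    (hz : Aminus N W = 0) (m : ℕ) :
    Aminus N ((Aplus N)^[m + 1] W) = mcoef N k m • (Aplus N)^[m] W := by
  induction m with
  | zero =>
      rw [Function.iterate_one]
      rw [comm_on_supp hs, hz]
      have : Aplus N (0 : Finset (Fin N) → ℝ) = 0 := by funext S; simp [Aplus]
      rw [this]
      simp only [Function.iterate_zero, id_eq, zero_add]
      congr 1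
      simp [mcoef]
  | succ m ih =>
      have hsupp : suppOn N (k + (m + 1)) ((Aplus N)^[m + 1] W) :=
        Aplus_iter_suppOn hs (m + 1)
      rw [show m + 1 + 1 = (m + 1) + 1 from rfl, Function.iterate_succ_apply']
      rw [comm_on_supp hsupp, ih, Aplus_smul]
      rw [← Function.iterate_succ_apply' (Aplus N) m W]
      funext S
      simp only [Pi.add_apply, Pi.smul_apply, smul_eq_mul, mcoef_succ]
      push_cast
      ring

lemma key_lemma {k : ℕ} {W : Finset (Fin N) → ℝ} (hs : suppOn N k W)
    (hz : Aminus N W = 0) (m : ℕ) :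
    (Aminus N)^[m] ((Aplus N)^[m] W) = (∏ j ∈ Finset.range m, mcoef N k j) • W := by
  induction m with
  | zero => simp
  | succ m ih =>
      rw [Function.iterate_succ_apply, step_lemma hs hz, Aminus_iter_smul, ih,
        Finset.prod_range_succ, smul_smul, mul_comm]

end Aux

/-- if `V = Σ_{k=0}^{r} A₊^{r−k}W_k` with `W_k ∈ W_k`, then
`A₋^{r}V = (∏_{j=0}^{r−1} m(0,j))·W_0`. -/
theorem extract_W0 (N r : ℕ) (hN : 1 ≤ N) (hr : r ≤ N)
    (W : ℕ → Finset (Fin N) → ℝ) (hW : ∀ k ≤ r, memW N k (W k))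
    (V : Finset (Fin N) → ℝ)
    (hV : V = ∑ k ∈ Finset.range (r + 1), (Aplus N)^[r - k] (W k)) :
    (Aminus N)^[r] V = (∏ j ∈ Finset.range r, mcoef N 0 j) • W 0 := by
  subst hV
  rw [Aminus_iter_sum]
  rw [Finset.sum_eq_single 0]
  · have h0 := hW 0 (Nat.zero_le r)
    have := key_lemma h0.1 (Aminus_eq_zero_of_memW h0) r
    simpa using this
  · intro k hk hk0
    have hkr : k ≤ r := by
      have := Finset.mem_range.1 hk
      omega
    have hWk := hW k hkr
    have hz : Aminus N (W k) = 0 := Aminus_eq_zero_of_memW hWk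
    have hkey := key_lemma hWk.1 hz (r - k)
    have hsplit : (Aminus N)^[r] ((Aplus N)^[r - k] (W k))
        = (Aminus N)^[k] ((Aminus N)^[r - k] ((Aplus N)^[r - k] (W k))) := by
      rw [← Function.iterate_add_apply]
      congr 1
      omega
    rw [hsplit, hkey]
    rcases k with _ | k'
    · exact absurd rfl hk0
    · rw [Function.iterate_succ_apply, Aminus_smul, hz, smul_zero, Aminus_iter_zero]
  · intro h
    exact absurd (Finset.mem_range.2 (by omega)) h
end

section
/- Let 0 ≤ r ≤ K < N and let M be a real (N−r+1)×(N−r+1) matrix such that P_K(A₊^{ℓ}W) = Σ_{k=0}^{N−r} M(k,ℓ)·A₊^{k}W for every W ∈ W_r and every 0 ≤ ℓ ≤ N−r. Suppose λ ∈ ℝ and the real numbers c_0, …, c_{K−r} satisfy Σ_{ℓ=0}^{K−r} M(k,ℓ)·c_ℓ = λ·c_k for every 0 ≤ k ≤ K−r. Then for every W ∈ W_r, the vertex function V = Σ_{k=0}^{K−r} c_k·A₊^{k}W satisfies Q_K P_K Q_K V = λV, and the vertex function HV defined by (HV)(R) = Σ_S (−1)^{|R∩S|} V(S) satisfies P_K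 Q_K P_K (HV) = λ·HV. -/
open Finset

/-!
Since `H² = 2^N` and `P_K = 2^{-N} H Q_K H`, conjugation by `H` exchanges the two truncations:
`P_K Q_K P_K H = H Q_K P_K Q_K`, so the second claim follows from the first. For the first,
`A₊^k W` lives on `Σ_{r+k}`, so `Q_K` keeps exactly the terms with `k ≤ K - r`; on their span
`Q_K P_K Q_K` therefore acts on coefficients through the principal `(K-r+1)`-minor of `M`.
-/

open Matrix

theorem neg_one_pow_card_inter_eq_prod {α 𝕜 : Type*} [DecidableEq α] [CommRing 𝕜]
    (R S : Finset α) :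
    (-1 : 𝕜) ^ (R ∩ S).card = ∏ i ∈ S, if i ∈ R then -1 else 1 := by
  rw [prod_ite_mem, prod_const, inter_comm]

theorem sum_neg_one_pow_card_inter_mul {α 𝕜 : Type*} [Fintype α] [DecidableEq α] [CommRing 𝕜]
    (R T : Finset α) :
    ∑ S : Finset α, (-1 : 𝕜) ^ (R ∩ S).card * (-1) ^ (T ∩ S).card
      = if R = T then 2 ^ Fintype.card α else 0 := by
  -- `∑_S ∏_{i ∈ S} f i = ∏_i (1 + f i)`, and the factor at any `i ∈ R ∆ T` vanishes.
  simp_rw [neg_one_pow_card_inter_eq_prod, ← prod_mul_distrib]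
  rw [← powerset_univ, ← prod_one_add]
  split_ifs with hRT
  · subst hRT
    rw [← card_univ, ← prod_const]
    refine prod_congr rfl fun i _ => ?_
    split_ifs <;> norm_num [one_add_one_eq_two]
  · obtain ⟨i, hi⟩ : ∃ i, ¬ (i ∈ R ↔ i ∈ T) := by
      by_contra! h
      exact hRT (ext h)
    exact prod_eq_zero (mem_univ i) (by split_ifs <;> simp_all)

section Hadamard

variable (N K : ℕ)

def hadamardMatrix : Matrix (Finset (Fin N)) (Finset (Fin N)) ℝ :=
  of fun R S => Had N S R

def truncMatrix : Matrix (Finset (Fin N)) (Finset (Fin N)) ℝ :=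
  diagonal fun S => if S.card ≤ K then 1 else 0

noncomputable def spectralProjMatrix : Matrix (Finset (Fin N)) (Finset (Fin N)) ℝ :=
  ((2 : ℝ) ^ N)⁻¹ • (hadamardMatrix N * truncMatrix N K * hadamardMatrix N)

variable {N K}

theorem Hmat_eq_mulVec (V : Finset (Fin N) → ℝ) : Hmat N V = hadamardMatrix N *ᵥ V := rfl

theorem QK_eq_mulVec (V : Finset (Fin N) → ℝ) : QK N K V = truncMatrix N K *ᵥ V := by
  funext S
  rw [truncMatrix, mulVec_diagonal, QK]
  split_ifs <;> simp

theorem hadamardMatrix_mul_self : hadamardMatrix N * hadamardMatrix N = (2 ^ N : ℝ) • 1 := by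
  ext R T
  simp only [mul_apply, hadamardMatrix, of_apply, Had, Matrix.smul_apply, one_apply, smul_eq_mul,
    mul_ite, mul_one, mul_zero]
  simp_rw [inter_comm _ T]
  rw [sum_neg_one_pow_card_inter_mul, Fintype.card_fin]

theorem PK_eq_mulVec (V : Finset (Fin N) → ℝ) : PK N K V = spectralProjMatrix N K *ᵥ V := by
  rw [spectralProjMatrix, smul_mulVec, ← mulVec_mulVec, ← mulVec_mulVec, ← Hmat_eq_mulVec,
    ← QK_eq_mulVec, ← Hmat_eq_mulVec]
  funext R
  simp only [PK, Pi.smul_apply, smul_eq_mul, Hmat, QK, mul_sum]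
  rw [sum_filter]
  refine sum_congr rfl fun S _ => ?_
  split_ifs
  · have hinner : inner' N V (Had N S) = ∑ T, Had N T S * V T :=
      sum_congr rfl fun T _ => by rw [Had, Had, inter_comm, mul_comm]
    rw [hinner]
    ring
  · simp

theorem spectralProjMatrix_mul_hadamardMatrix :
    spectralProjMatrix N K * hadamardMatrix N = hadamardMatrix N * truncMatrix N K := by
  rw [spectralProjMatrix, Matrix.smul_mul, Matrix.mul_assoc, hadamardMatrix_mul_self,
    Matrix.mul_smul, Matrix.mul_one, smul_smul, inv_mul_cancel₀ (by positivity), one_smul]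

theorem PK_QK_PK_Hmat (V : Finset (Fin N) → ℝ) :
    PK N K (QK N K (PK N K (Hmat N V))) = Hmat N (QK N K (PK N K (QK N K V))) := by
  simp only [PK_eq_mulVec, QK_eq_mulVec, Hmat_eq_mulVec, mulVec_mulVec]
  congr 1
  rw [spectralProjMatrix_mul_hadamardMatrix]
  simp only [spectralProjMatrix, Matrix.smul_mul, Matrix.mul_smul, Matrix.mul_assoc]

theorem Hmat_smul (a : ℝ) (V : Finset (Fin N) → ℝ) : Hmat N (a • V) = a • Hmat N V := by
  simp only [Hmat_eq_mulVec, mulVec_smul]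

end Hadamard

section Support

variable {N : ℕ}

theorem suppOn_Aplus {r : ℕ} {V : Finset (Fin N) → ℝ} (h : suppOn N r V) :
    suppOn N (r + 1) (Aplus N V) := by
  intro S hS
  refine sum_eq_zero fun s hs => h _ ?_
  have : 0 < S.card := card_pos.mpr ⟨s, hs⟩
  rw [card_erase_of_mem hs]
  omega

theorem suppOn_iterate_Aplus {r : ℕ} {V : Finset (Fin N) → ℝ} (h : suppOn N r V) (k : ℕ) :
    suppOn N (r + k) ((Aplus N)^[k] V) := by
  induction k with
  | zero => exact h
  | succ k ih =>
    rw [Function.iterate_succ_apply']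
    exact suppOn_Aplus ih

theorem QK_eq_self_of_suppOn {K m : ℕ} {V : Finset (Fin N) → ℝ} (h : suppOn N m V)
    (hm : m ≤ K) : QK N K V = V := by
  funext S
  rw [QK, ite_eq_left_iff]
  exact fun hS => (h S (by omega)).symm

theorem QK_eq_zero_of_suppOn {K m : ℕ} {V : Finset (Fin N) → ℝ} (h : suppOn N m V)
    (hm : K < m) : QK N K V = 0 := by
  funext S
  rw [QK, Pi.zero_apply, ite_eq_right_iff]
  exact fun hS => h S (by omega)

theorem QK_sum_smul_iterate_Aplus {r K : ℕ} {W : Finset (Fin N) → ℝ} (hW : suppOn N r W)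
    (s : Finset ℕ) (a : ℕ → ℝ) :
    QK N K (∑ k ∈ s, a k • (Aplus N)^[k] W) = ∑ k ∈ s with r + k ≤ K, a k • (Aplus N)^[k] W := by
  rw [QK_eq_mulVec, mulVec_sum, sum_filter]
  refine sum_congr rfl fun k _ => ?_
  rw [mulVec_smul, ← QK_eq_mulVec]
  split_ifs with hk
  · rw [QK_eq_self_of_suppOn (suppOn_iterate_Aplus hW k) hk]
  · rw [QK_eq_zero_of_suppOn (suppOn_iterate_Aplus hW k) (by omega), smul_zero]

end Support

theorem qpq_pqp_eigenvectors_general (N r K : ℕ) (hrK : r ≤ K) (hK : K < N)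
    (M : ℕ → ℕ → ℝ)
    (hM : ∀ W : Finset (Fin N) → ℝ, memW N r W → ∀ ℓ ≤ N - r,
      PK N K ((Aplus N)^[ℓ] W)
        = ∑ k ∈ Finset.range (N - r + 1), M k ℓ • (Aplus N)^[k] W)
    (lam : ℝ) (c : ℕ → ℝ)
    (heig : ∀ k ≤ K - r, ∑ ℓ ∈ Finset.range (K - r + 1), M k ℓ * c ℓ = lam * c k)
    (W : Finset (Fin N) → ℝ) (hW : memW N r W) :
    QK N K (PK N K (QK N K (∑ k ∈ Finset.range (K - r + 1), c k • (Aplus N)^[k] W)))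
        = lam • ∑ k ∈ Finset.range (K - r + 1), c k • (Aplus N)^[k] W ∧
    PK N K (QK N K (PK N K
        (Hmat N (∑ k ∈ Finset.range (K - r + 1), c k • (Aplus N)^[k] W))))
      = lam • Hmat N (∑ k ∈ Finset.range (K - r + 1), c k • (Aplus N)^[k] W) := by
  set V := ∑ k ∈ range (K - r + 1), c k • (Aplus N)^[k] W with hV
  have filter_range : ∀ n, K - r + 1 ≤ n → {k ∈ range n | r + k ≤ K} = range (K - r + 1) := by
    intro n hn
    ext k
    simp only [mem_filter, mem_range]
    omega
  have hQV : QK N K V = V := by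
    rw [QK_sum_smul_iterate_Aplus hW.1, filter_range _ le_rfl]
  have hPV : PK N K V = ∑ k ∈ range (N - r + 1),
      (∑ ℓ ∈ range (K - r + 1), M k ℓ * c ℓ) • (Aplus N)^[k] W := by
    rw [PK_eq_mulVec, mulVec_sum]
    simp_rw [mulVec_smul, ← PK_eq_mulVec]
    rw [sum_congr rfl fun ℓ hℓ => by rw [hM W hW ℓ (by rw [mem_range] at hℓ; omega)]]
    simp only [smul_sum, smul_smul, sum_smul]
    rw [sum_comm]
    simp_rw [mul_comm]
  have hQPQ : QK N K (PK N K (QK N K V)) = lam • V := by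
    rw [hQV, hPV, QK_sum_smul_iterate_Aplus hW.1, filter_range _ (by omega), hV, smul_sum]
    refine sum_congr rfl fun k hk => ?_
    rw [heig k (by rw [mem_range] at hk; omega), mul_smul]
  exact ⟨hQPQ, by rw [PK_QK_PK_Hmat, hQPQ, Hmat_smul]⟩

/-- if `M` represents `P_K` on `V_r` and `(c_0,…,c_{K−r})` is a
`λ`-eigenvector of the principal `(K−r+1)`-minor of `M`, then for every `W ∈ W_r`,
`V = Σ_{k=0}^{K−r} c_k·A₊^{k}W` satisfies `Q_K P_K Q_K V = λV`, and
`HV` satisfies `P_K Q_K P_K (HV) = λ·HV`. -/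
theorem qpq_pqp_eigenvectors (N r K : ℕ) (hN : 1 ≤ N) (hrK : r ≤ K) (hK : K < N)
    (M : ℕ → ℕ → ℝ)
    (hM : ∀ W : Finset (Fin N) → ℝ, memW N r W → ∀ ℓ ≤ N - r,
      PK N K ((Aplus N)^[ℓ] W)
        = ∑ k ∈ Finset.range (N - r + 1), M k ℓ • (Aplus N)^[k] W)
    (lam : ℝ) (c : ℕ → ℝ)
    (heig : ∀ k ≤ K - r, ∑ ℓ ∈ Finset.range (K - r + 1), M k ℓ * c ℓ = lam * c k)
    (W : Finset (Fin N) → ℝ) (hW : memW N r W) :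
    QK N K (PK N K (QK N K (∑ k ∈ Finset.range (K - r + 1), c k • (Aplus N)^[k] W)))
        = lam • ∑ k ∈ Finset.range (K - r + 1), c k • (Aplus N)^[k] W ∧
    PK N K (QK N K (PK N K
        (Hmat N (∑ k ∈ Finset.range (K - r + 1), c k • (Aplus N)^[k] W))))
      = lam • Hmat N (∑ k ∈ Finset.range (K - r + 1), c k • (Aplus N)^[k] W) :=
  qpq_pqp_eigenvectors_general N r K hrK hK M hM lam c heig W hW
end
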